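/- arXiv:2504.14751 — 2 statements merged into one kernel-verified Lean document; each statement's English description precedes it below -/
import Mathlib

section
/- Let k, k₁, …, k_n ∈ ℝ^d with all stored keys of equal norm (‖k_i‖ = ‖k_j‖ for all i, j), let v₁, …, v_n ∈ ℝ^d and β ∈ ℝ. Then the Gaussian kernel smoothing retrieval equals the dot-product attention form: Σ_{i=1}^n (exp(−β‖k − k_i‖²) / Σ_{j=1}^n exp(−β‖k − k_j‖²)) · v_i = Σ_{i=1}^n (exp(2β⟨k, k_i⟩) / Σ_{j=1}^n exp(2β⟨k, k_j⟩)) · v_i. -/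
open scoped RealInnerProductSpace

/-- When all stored keys have equal Euclidean norm, Gaussian kernel smoothing retrieval
equals the dot-product attention form. -/
theorem gaussian_smoothing_eq_attention {d n : ℕ} (β : ℝ)
    (k : EuclideanSpace ℝ (Fin d))
    (ks vs : Fin n → EuclideanSpace ℝ (Fin d))
    (hnorm : ∀ i j, ‖ks i‖ = ‖ks j‖) :
    ∑ i, (Real.exp (-β * ‖k - ks i‖ ^ 2) / ∑ j, Real.exp (-β * ‖k - ks j‖ ^ 2)) • vs i
      = ∑ i, (Real.exp (2 * β * ⟪k, ks i⟫) / ∑ j, Real.exp (2 * β * ⟪k, ks j⟫)) • vs i := by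
  apply Finset.sum_congr rfl
  intro i _
  congr 1
  have key : ∀ j : Fin n, Real.exp (-β * ‖k - ks j‖ ^ 2)
      = Real.exp (-β * (‖k‖ ^ 2 + ‖ks i‖ ^ 2)) * Real.exp (2 * β * ⟪k, ks j⟫) := by
    intro j
    rw [← Real.exp_add]
    congr 1
    have h1 : ‖k - ks j‖ ^ 2 = ‖k‖ ^ 2 - 2 * ⟪k, ks j⟫ + ‖ks j‖ ^ 2 :=
      norm_sub_sq_real k (ks j)
    rw [h1, hnorm j i]
    ring
  simp only [key]
  rw [← Finset.mul_sum, mul_div_mul_left]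
  exact (Real.exp_pos _).ne'
end

section
/- Let E be a finite set of environments with |E| ≥ 2, let each L_e : ℝⁿ → ℝ be twice continuously differentiable, fix θ ∈ ℝⁿ, and let s be the set of ordered pairs of distinct environments {(i,j) : i,j ∈ E, i ≠ j}, equipped with the uniform distribution. Then the variance of the post-update losses expands as: the function α ↦ Var_s[L_j(θ − α∇L_i(θ))] − Var_s[L_j(θ)] + 2α Cov_s[L_j(θ), ⟨∇L_i(θ), ∇L_j(θ)⟩] is O(α²) as α → 0, where the variance and covariance are taken over the random pair (i,j) ∈ s. -/
open scoped RealInnerProductSpace Topology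
open Asymptotics

/-- The uniform mean over ordered pairs of distinct environments. -/
noncomputable def pairMean {ι : Type*} [Fintype ι] [DecidableEq ι] (f : ι × ι → ℝ) : ℝ :=
  ((Finset.univ : Finset ι).offDiag.card : ℝ)⁻¹ * ∑ p ∈ (Finset.univ : Finset ι).offDiag, f p

/-- The variance over ordered pairs of distinct environments:
`Var_s[A] = E_s[(A - E_s A)²]`. -/
noncomputable def pairVar {ι : Type*} [Fintype ι] [DecidableEq ι] (f : ι × ι → ℝ) : ℝ :=
  pairMean fun p => (f p - pairMean f) ^ 2

/-- The covariance over ordered pairs of distinct environments: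
`Cov_s[A,B] = E_s[AB] - E_s[A] E_s[B]`. -/
noncomputable def pairCov {ι : Type*} [Fintype ι] [DecidableEq ι] (f g : ι × ι → ℝ) : ℝ :=
  pairMean (fun p => f p * g p) - pairMean f * pairMean g

/-!
The left-hand side `F α` is a `C²` function of `α` with `F 0 = 0`, so by Taylor's theorem it is
`O(α²)` as soon as `F' 0 = 0`. Since `Var_s[A] = E_s[A²] - E_s[A]²`, the derivative of
`α ↦ Var_s[A α]` is `2 Cov_s[A, A']`; the derivative of `α ↦ L_j(θ - α∇L_i(θ))` at `0` is
`-⟨∇L_i(θ), ∇L_j(θ)⟩`, so the variance term contributes `-2 Cov_s[L_j(θ), ⟨∇L_i(θ), ∇L_j(θ)⟩]`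
to `F' 0`, which cancels the derivative of the covariance term.
-/

open Finset

section PairStatistics

variable {ι : Type*} [Fintype ι] [DecidableEq ι]

theorem pairVar_eq_pairMean_sq_sub (f : ι × ι → ℝ) :
    pairVar f = pairMean (fun p => f p ^ 2) - pairMean f ^ 2 := by
  set N : ℝ := ((univ : Finset ι).offDiag.card : ℝ)
  -- This also holds when there are no pairs, since then `N⁻¹ = 0`.
  have hN : N⁻¹ * N * N⁻¹ = N⁻¹ := by simpa using mul_inv_mul_cancel N⁻¹
  simp only [pairVar, pairMean, sub_sq, sum_add_distrib, sum_sub_distrib, ← sum_mul, ← mul_sum,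
    sum_const, nsmul_eq_mul]
  linear_combination (∑ p ∈ (univ : Finset ι).offDiag, f p) ^ 2 * N⁻¹ * hN

theorem pairCov_neg_right (f g : ι × ι → ℝ) :
    pairCov f (fun p => -g p) = -pairCov f g := by
  simp only [pairCov, pairMean, mul_neg, sum_neg_distrib]
  ring

variable {𝕜 : Type*} [NontriviallyNormedField 𝕜] [NormedAlgebra 𝕜 ℝ]

theorem ContDiff.pairMean {n : WithTop ℕ∞} {f : ι × ι → 𝕜 → ℝ} (hf : ∀ p, ContDiff 𝕜 n (f p)) :
    ContDiff 𝕜 n fun t => _root_.pairMean fun p => f p t :=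
  contDiff_const.mul (ContDiff.sum fun p _ => hf p)

theorem ContDiff.pairVar {n : WithTop ℕ∞} {f : ι × ι → 𝕜 → ℝ} (hf : ∀ p, ContDiff 𝕜 n (f p)) :
    ContDiff 𝕜 n fun t => _root_.pairVar fun p => f p t :=
  ContDiff.pairMean fun p => ((hf p).sub (ContDiff.pairMean hf)).pow 2

theorem HasDerivAt.pairMean {f : ι × ι → 𝕜 → ℝ} {f' : ι × ι → ℝ} {x : 𝕜}
    (hf : ∀ p, HasDerivAt (f p) (f' p) x) :
    HasDerivAt (fun t => _root_.pairMean fun p => f p t) (_root_.pairMean f') x :=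
  (HasDerivAt.fun_sum fun p _ => hf p).const_mul _

theorem HasDerivAt.pairVar {f : ι × ι → 𝕜 → ℝ} {f' : ι × ι → ℝ} {x : 𝕜}
    (hf : ∀ p, HasDerivAt (f p) (f' p) x) :
    HasDerivAt (fun t => _root_.pairVar fun p => f p t)
      (2 * pairCov (fun p => f p x) f') x := by
  simp only [pairVar_eq_pairMean_sq_sub, sq]
  refine ((HasDerivAt.pairMean fun p => (hf p).fun_mul (hf p)).fun_sub
    ((HasDerivAt.pairMean hf).fun_mul (HasDerivAt.pairMean hf))).congr_deriv ?_
  simp only [pairCov, _root_.pairMean, mul_add, sum_add_distrib, mul_comm (f' _)]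
  ring

end PairStatistics

theorem DifferentiableAt.hasDerivAt_comp_sub_smul {E : Type*} [NormedAddCommGroup E]
    [InnerProductSpace ℝ E] [CompleteSpace E] {f : E → ℝ} {θ : E}
    (hf : DifferentiableAt ℝ f θ) (v : E) :
    HasDerivAt (fun t : ℝ => f (θ - t • v)) (-⟪v, gradient f θ⟫) 0 := by
  have hline : HasDerivAt (fun t : ℝ => θ - t • v) (-v) 0 := by
    simpa using ((hasDerivAt_id (0 : ℝ)).smul_const v).const_sub θ
  have hf' : HasFDerivAt f (fderiv ℝ f θ) (θ - (0 : ℝ) • v) := by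
    simpa using hf.hasFDerivAt
  have hcomp := hf'.comp_hasDerivAt (0 : ℝ) hline
  rwa [map_neg, ← toDual_gradient, InnerProductSpace.toDual_apply_apply, real_inner_comm] at hcomp

theorem ContDiff.isBigO_sub_sq_of_deriv_eq_zero {E : Type*} [NormedAddCommGroup E]
    [NormedSpace ℝ E] {f : ℝ → E} {x₀ : ℝ} (hf : ContDiff ℝ 2 f) (h0 : f x₀ = 0)
    (h1 : deriv f x₀ = 0) :
    f =O[𝓝 x₀] fun x => (x - x₀) ^ 2 := by
  have htaylor : taylorWithinEval f 2 Set.univ x₀ =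
      fun x => ((x - x₀) ^ 2 / 2) • iteratedDeriv 2 f x₀ := by
    ext x
    simp [taylor_within_apply, iteratedDerivWithin_univ, h0, h1, div_eq_inv_mul,
      one_add_one_eq_two]
  have hrem := (taylor_isLittleO_univ (x₀ := x₀) hf).isBigO
  rw [htaylor] at hrem
  have hquad : (fun x => ((x - x₀) ^ 2 / 2) • iteratedDeriv 2 f x₀) =O[𝓝 x₀]
      fun x => (x - x₀) ^ 2 :=
    isBigO_of_le' (c := ‖iteratedDeriv 2 f x₀‖) _ fun x => by
      rw [norm_smul, norm_div, Real.norm_two, mul_comm]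
      gcongr
      linarith [norm_nonneg ((x - x₀) ^ 2)]
  exact (hrem.add hquad).congr_left fun x => sub_add_cancel _ _

theorem maml_irm_variance_expansion_general {n : ℕ} {ι : Type*} [Fintype ι] [DecidableEq ι]
    (L : ι → EuclideanSpace ℝ (Fin n) → ℝ) (hL : ∀ e, ContDiff ℝ 2 (L e))
    (θ : EuclideanSpace ℝ (Fin n)) :
    (fun α : ℝ =>
        pairVar (fun p : ι × ι => L p.2 (θ - α • gradient (L p.1) θ))
          - pairVar (fun p : ι × ι => L p.2 θ)
          + 2 * α * pairCov (fun p : ι × ι => L p.2 θ)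
              (fun p : ι × ι => ⟪gradient (L p.1) θ, gradient (L p.2) θ⟫))
      =O[𝓝 (0 : ℝ)] fun α : ℝ => α ^ 2 := by
  have hstep : ∀ p : ι × ι, HasDerivAt (fun α : ℝ => L p.2 (θ - α • gradient (L p.1) θ))
      (-⟪gradient (L p.1) θ, gradient (L p.2) θ⟫) 0 := fun p =>
    ((hL p.2).differentiable two_ne_zero θ).hasDerivAt_comp_sub_smul _
  have hderiv := ((HasDerivAt.pairVar hstep).sub_const (pairVar fun p : ι × ι => L p.2 θ)).add
    (((hasDerivAt_id (0 : ℝ)).const_mul 2).mul_const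
      (pairCov (fun p : ι × ι => L p.2 θ)
        (fun p : ι × ι => ⟪gradient (L p.1) θ, gradient (L p.2) θ⟫)))
  simp only [pairCov_neg_right, id, mul_one, zero_smul, sub_zero, mul_neg, neg_add_cancel]
    at hderiv
  refine (ContDiff.isBigO_sub_sq_of_deriv_eq_zero ?_ (by simp) hderiv.deriv).congr_right
    fun α => by rw [sub_zero]
  refine ((ContDiff.pairVar fun p => ?_).sub contDiff_const).add
    ((contDiff_const.mul contDiff_id).mul contDiff_const)
  exact (hL p.2).comp (contDiff_const.sub (contDiff_id.smul contDiff_const))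

/-- Expansion of the variance of the post-update losses:
`Var_s[L_j(θ - α∇L_i(θ))] - Var_s[L_j(θ)] + 2α Cov_s[L_j(θ), ⟨∇L_i(θ), ∇L_j(θ)⟩] = O(α²)`
as `α → 0`, where `s` is the uniform distribution over ordered pairs of distinct
environments from a finite set of at least two environments. -/
theorem maml_irm_variance_expansion {n : ℕ} {ι : Type*} [Fintype ι] [DecidableEq ι]
    (hcard : 2 ≤ Fintype.card ι)
    (L : ι → EuclideanSpace ℝ (Fin n) → ℝ) (hL : ∀ e, ContDiff ℝ 2 (L e))
    (θ : EuclideanSpace ℝ (Fin n)) :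
    (fun α : ℝ =>
        pairVar (fun p : ι × ι => L p.2 (θ - α • gradient (L p.1) θ))
          - pairVar (fun p : ι × ι => L p.2 θ)
          + 2 * α * pairCov (fun p : ι × ι => L p.2 θ)
              (fun p : ι × ι => ⟪gradient (L p.1) θ, gradient (L p.2) θ⟫))
      =O[𝓝 (0 : ℝ)] fun α : ℝ => α ^ 2 :=
  maml_irm_variance_expansion_general L hL θ
end
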